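/- Let r₂ = (w⁽¹⁾)² − (9/4)ℓ⁽⁰⁾(ℓ⁽¹⁾)² ∈ P. Then r₂ does not lie in the ideal I generated by {f⁽ⁱ⁾ : i ≥ 0}, where f⁽ⁱ⁾ = Dⁱ((w⁽⁰⁾)² − (ℓ⁽⁰⁾)³). (In particular the image of r₂ in P/I is a nonzero nilpotent element.) -/

import Mathlib

/-!
Give `ℓ⁽ⁱ⁾` and `w⁽ⁱ⁾` degree `1` and order `i`. Then `D` preserves degree and raises order by one,
so `Dⁱ((w⁽⁰⁾)²)` and `Dⁱ((ℓ⁽⁰⁾)³)` are homogeneous of degrees `2` and `3` and of order `i`.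
Consequently, for every `q`, the coefficients of the degree-`2` monomials `(w⁽¹⁾)²` and
`w⁽⁰⁾w⁽²⁾` in `q f⁽ⁱ⁾` are `q(0)` times those in `Dⁱ((w⁽⁰⁾)²)`: both vanish for `i ≠ 2`, and both
are `2` for `i = 2`, since `D²((w⁽⁰⁾)²) = 2(w⁽¹⁾)² + 2w⁽⁰⁾w⁽²⁾`. So the two coefficients agree on
all of `I`, whereas in `r₂` they are `1` and `0`.
-/

open MvPolynomial

noncomputable section

/-- The polynomial ring `P = ℂ[ℓ⁽⁰⁾, ℓ⁽¹⁾, …, w⁽⁰⁾, w⁽¹⁾, …]`: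
variables are indexed by `Fin 2 × ℕ`, where `(0, i)` is `ℓ⁽ⁱ⁾` and `(1, i)` is `w⁽ⁱ⁾`. -/
abbrev P : Type := MvPolynomial (Fin 2 × ℕ) ℂ

/-- The unique ℂ-linear derivation `D : P → P` with `D(ℓ⁽ⁱ⁾) = ℓ⁽ⁱ⁺¹⁾`, `D(w⁽ⁱ⁾) = w⁽ⁱ⁺¹⁾`. -/
def D : Derivation ℂ P P :=
  MvPolynomial.mkDerivation ℂ (fun p : Fin 2 × ℕ => (X (p.1, p.2 + 1) : P))

/-- `ℓ⁽ⁱ⁾` -/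
def lv (i : ℕ) : P := X (0, i)

/-- `w⁽ⁱ⁾` -/
def wv (i : ℕ) : P := X (1, i)

/-- `f = (w⁽⁰⁾)² − (ℓ⁽⁰⁾)³`. -/
def f : P := wv 0 ^ 2 - lv 0 ^ 3

/-- `f⁽ⁱ⁾ = Dⁱ(f)`. -/
def fd (i : ℕ) : P := (⇑D)^[i] f

/-- The ideal `I` generated by all `f⁽ⁱ⁾`, `i ≥ 0`. -/
def I : Ideal P := Ideal.span (Set.range fd)

/-- `r₂ = (w⁽¹⁾)² − (9/4)ℓ⁽⁰⁾(ℓ⁽¹⁾)²`. -/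
def r₂ : P := wv 1 ^ 2 - C ((9 : ℂ)/4) * lv 0 * lv 1 ^ 2

namespace MvPolynomial

section Derivation

variable {σ R M : Type*} [CommSemiring R] [AddCommMonoid M] {w : σ → M} {e : M}
  {δ : Derivation R (MvPolynomial σ R) (MvPolynomial σ R)}

theorem isWeightedHomogeneous_derivation_monomial
    (hδ : ∀ v, IsWeightedHomogeneous w (δ (X v)) (w v + e)) (d : σ →₀ ℕ) (r : R) :
    IsWeightedHomogeneous w (δ (monomial d r)) (Finsupp.weight w d + e) := by
  induction d using Finsupp.induction₂ with
  | zero => simp [← C_apply, derivation_C, isWeightedHomogeneous_zero]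
  | add_single v k d _ hk ih =>
    obtain ⟨k, rfl⟩ := Nat.exists_eq_add_one_of_ne_zero hk
    have hX := isWeightedHomogeneous_X R w v
    have hd := isWeightedHomogeneous_monomial w d r rfl
    rw [monomial_add_single, δ.leibniz, δ.leibniz_pow, Nat.add_sub_cancel, smul_eq_mul,
      smul_eq_mul, smul_eq_mul, mul_smul_comm, map_add, Finsupp.weight_single]
    refine IsWeightedHomogeneous.add ?_ ?_
    · rw [← mem_weightedHomogeneousSubmodule]
      refine Submodule.smul_of_tower_mem _ _ ?_
      rw [mem_weightedHomogeneousSubmodule]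
      convert hd.mul ((hX.pow k).mul (hδ v)) using 1
      rw [succ_nsmul]
      abel
    · convert (hX.pow (k + 1)).mul ih using 1
      abel

theorem IsWeightedHomogeneous.derivation
    (hδ : ∀ v, IsWeightedHomogeneous w (δ (X v)) (w v + e)) {p : MvPolynomial σ R} {m : M}
    (hp : IsWeightedHomogeneous w p m) : IsWeightedHomogeneous w (δ p) (m + e) := by
  induction hp using IsWeightedHomogeneous.induction_on with
  | zero => simpa using isWeightedHomogeneous_zero R w (m + e)
  | add p q _ _ hp hq => simpa using hp.add hq
  | monomial d r hr => exact hr ▸ isWeightedHomogeneous_derivation_monomial hδ d r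

theorem IsWeightedHomogeneous.iterate_derivation
    (hδ : ∀ v, IsWeightedHomogeneous w (δ (X v)) (w v + e)) {p : MvPolynomial σ R} {m : M}
    (hp : IsWeightedHomogeneous w p m) (i : ℕ) :
    IsWeightedHomogeneous w ((⇑δ)^[i] p) (m + i • e) := by
  induction i with
  | zero => simpa using hp
  | succ i ih =>
    rw [Function.iterate_succ_apply', succ_nsmul, ← add_assoc]
    exact ih.derivation hδ

end Derivation

theorem IsHomogeneous.coeff_mul_of_degree_le {σ R : Type*} [CommSemiring R]
    {h : MvPolynomial σ R} {n : ℕ} (hh : IsHomogeneous h n) (q : MvPolynomial σ R)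
    {m : σ →₀ ℕ} (hm : m.degree ≤ n) :
    coeff m (q * h) = coeff 0 q * coeff m h := by
  classical
  rw [coeff_mul, Finset.sum_eq_single (0, m)]
  · rintro ⟨a, b⟩ hab hne
    rw [Finset.HasAntidiagonal.mem_antidiagonal] at hab
    dsimp only at hab ⊢
    have ha : a ≠ 0 := by rintro rfl; simp_all
    have hb : b.degree < n := by
      rw [← hab, map_add] at hm
      have := (Finsupp.degree_eq_zero_iff a).not.mpr ha
      omega
    rw [hh.coeff_eq_zero hb.ne, mul_zero]
  · simp

end MvPolynomial

def expW₁W₁ : (Fin 2 × ℕ) →₀ ℕ := Finsupp.single (1, 1) 2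

def expW₀W₂ : (Fin 2 × ℕ) →₀ ℕ := Finsupp.single (1, 0) 1 + Finsupp.single (1, 2) 1

lemma expW₁W₁_ne_expW₀W₂ : expW₁W₁ ≠ expW₀W₂ := fun h => by
  simpa [expW₁W₁, expW₀W₂] using DFunLike.congr_fun h (1, 1)

lemma D_X (v : Fin 2 × ℕ) : D (X v) = X (v.1, v.2 + 1) := mkDerivation_X ℂ _ v

lemma isWeightedHomogeneous_D_X {M : Type*} [AddCommMonoid M] {w : Fin 2 × ℕ → M} {e : M}
    (hw : ∀ v, w (v.1, v.2 + 1) = w v + e) (v : Fin 2 × ℕ) :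
    IsWeightedHomogeneous w (D (X v)) (w v + e) := by
  rw [D_X, ← hw]
  exact isWeightedHomogeneous_X ℂ w _

lemma isHomogeneous_iterate_D {p : P} {n : ℕ} (hp : p.IsHomogeneous n) (i : ℕ) :
    ((⇑D)^[i] p).IsHomogeneous n := by
  simpa [IsHomogeneous] using
    hp.iterate_derivation (isWeightedHomogeneous_D_X (w := 1) (e := 0) (by simp)) i

lemma coeff_mul_fd (q : P) (i : ℕ) {m : (Fin 2 × ℕ) →₀ ℕ} (hm : m.degree = 2) :
    coeff m (q * fd i) = coeff 0 q * coeff m ((⇑D)^[i] (wv 0 ^ 2)) := by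
  have hw : ((⇑D)^[i] (wv 0 ^ 2)).IsHomogeneous 2 :=
    isHomogeneous_iterate_D (by simpa [wv] using (isHomogeneous_X ℂ ((1 : Fin 2), 0)).pow 2) i
  have hl : ((⇑D)^[i] (lv 0 ^ 3)).IsHomogeneous 3 :=
    isHomogeneous_iterate_D (by simpa [lv] using (isHomogeneous_X ℂ ((0 : Fin 2), 0)).pow 3) i
  rw [fd, f, iterate_map_sub, mul_sub, coeff_sub, hw.coeff_mul_of_degree_le q hm.le,
    hl.coeff_mul_of_degree_le q (by omega), hl.coeff_eq_zero (by omega), mul_zero, sub_zero]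

lemma iterate_D_two_wv_sq :
    (⇑D)^[2] (wv 0 ^ 2) = 2 • (monomial expW₁W₁ 1 + monomial expW₀W₂ 1) := by
  have h₁₁ : X (1, 1) ^ 2 = (monomial expW₁W₁ 1 : P) := X_pow_eq_monomial
  have h₀₂ : X (1, 0) * X (1, 2) = (monomial expW₀W₂ 1 : P) := by
    rw [X, X, monomial_mul, one_mul]
    rfl
  rw [← h₁₁, ← h₀₂]
  simp only [Function.iterate_succ, Function.iterate_zero, Function.comp_apply, id, wv,
    D.leibniz_pow, map_nsmul, D.leibniz, D_X, smul_eq_mul]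
  ring

lemma coeff_expW₁W₁_iterate_D_wv_sq (i : ℕ) :
    coeff expW₁W₁ ((⇑D)^[i] (wv 0 ^ 2)) = coeff expW₀W₂ ((⇑D)^[i] (wv 0 ^ 2)) := by
  rcases eq_or_ne i 2 with rfl | hi
  · simp only [iterate_D_two_wv_sq, coeff_smul, coeff_add, coeff_monomial, if_pos,
      if_neg expW₁W₁_ne_expW₀W₂, if_neg expW₁W₁_ne_expW₀W₂.symm, add_zero, zero_add]
  · have h : IsWeightedHomogeneous Prod.snd ((⇑D)^[i] (wv 0 ^ 2)) i := by
      simpa [wv] using ((isWeightedHomogeneous_X ℂ Prod.snd ((1 : Fin 2), 0)).pow 2)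
        |>.iterate_derivation (isWeightedHomogeneous_D_X fun _ => rfl) i
    rw [h.coeff_eq_zero, h.coeff_eq_zero]
    all_goals simp [expW₁W₁, expW₀W₂, Finsupp.weight_single, hi.symm]

lemma coeff_expW₁W₁_mul_eq_of_mem_I {p : P} (hp : p ∈ I) (q : P) :
    coeff expW₁W₁ (q * p) = coeff expW₀W₂ (q * p) := by
  induction hp using Submodule.span_induction generalizing q with
  | mem _ h =>
    obtain ⟨i, rfl⟩ := h
    rw [coeff_mul_fd q i (by simp [expW₁W₁]), coeff_mul_fd q i (by simp [expW₀W₂]),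
      coeff_expW₁W₁_iterate_D_wv_sq]
  | zero => simp
  | add x y _ _ hx hy => simp only [mul_add, coeff_add, hx, hy]
  | smul a x _ hx => rw [smul_eq_mul, ← mul_assoc, hx]

lemma r₂_eq_monomial_sub_monomial :
    r₂ = monomial expW₁W₁ 1 -
      monomial (Finsupp.single (0, 0) 1 + Finsupp.single (0, 1) 2) (9 / 4) := by
  simp [r₂, wv, lv, expW₁W₁, X, C_mul_monomial, monomial_pow, monomial_mul]

lemma coeff_expW₁W₁_r₂ : coeff expW₁W₁ r₂ = 1 := by
  rw [r₂_eq_monomial_sub_monomial, coeff_sub, coeff_monomial, coeff_monomial, if_pos rfl, if_neg,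
    sub_zero]
  exact fun h => by simpa [expW₁W₁] using DFunLike.congr_fun h (0, 0)

lemma coeff_expW₀W₂_r₂ : coeff expW₀W₂ r₂ = 0 := by
  rw [r₂_eq_monomial_sub_monomial, coeff_sub, coeff_monomial, coeff_monomial,
    if_neg expW₁W₁_ne_expW₀W₂, if_neg, sub_zero]
  exact fun h => by simpa [expW₀W₂] using DFunLike.congr_fun h (0, 0)

theorem r₂_not_mem : r₂ ∉ I := by
  intro h
  have := coeff_expW₁W₁_mul_eq_of_mem_I h 1
  rw [one_mul, coeff_expW₁W₁_r₂, coeff_expW₀W₂_r₂] at this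
  exact one_ne_zero this
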